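/- arXiv:0910.4618 — 7 statements merged into one kernel-verified Lean document; each statement's English description precedes it below -/
import Mathlib

section
/- A feasible allocation (x, y, Z) maximizes social welfare Π(x, y, Z) = ∑_{i=1}^N [f(x_i + d_i) − κ·x_i − δ·d_i − σ·u_i] over all feasible allocations if and only if ∑_{i=1}^N x_i = x̂_β and x_i = y_i = z_{ji} for every j ≠ i and every i ∈ {1,…,N}; moreover, the maximum value of Π equals N·f*(β). -/
open Filter Finset

/-- The benefit function `f` with its first and second derivatives, together with
the maximizer map `α ↦ x̂_α` (the unique `x ≥ 0` with `f'(x̂_α) = α` for `α ∈ (0, f'(0)]`). -/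
structure BenefitFun where
  f : ℝ → ℝ
  f' : ℝ → ℝ
  f'' : ℝ → ℝ
  xhat : ℝ → ℝ
  f_zero : f 0 = 0
  f_nonneg : ∀ x : ℝ, 0 ≤ x → 0 ≤ f x
  hasDeriv : ∀ x ∈ Set.Ici (0:ℝ), HasDerivWithinAt f (f' x) (Set.Ici 0) x
  hasDeriv' : ∀ x ∈ Set.Ici (0:ℝ), HasDerivWithinAt f' (f'' x) (Set.Ici 0) x
  cont_f'' : ContinuousOn f'' (Set.Ici 0)
  f'_pos : ∀ x : ℝ, 0 < x → 0 < f' x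
  f''_neg : ∀ x : ℝ, 0 < x → f'' x < 0
  f'_tendsto : Filter.Tendsto f' Filter.atTop (nhds 0)
  xhat_nonneg : ∀ α : ℝ, 0 < α → α ≤ f' 0 → 0 ≤ xhat α
  xhat_spec : ∀ α : ℝ, 0 < α → α ≤ f' 0 → f' (xhat α) = α
  xhat_unique : ∀ α : ℝ, 0 < α → α ≤ f' 0 → ∀ x : ℝ, 0 ≤ x → f' x = α → x = xhat α
  xhat_max : ∀ α : ℝ, 0 < α → α ≤ f' 0 → ∀ x : ℝ, 0 ≤ x → f x - α * x ≤ f (xhat α) - α * xhat α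

/-- `f*(α) = f(x̂_α) − α·x̂_α = sup_{x ≥ 0} (f(x) − α x)`. -/
noncomputable def BenefitFun.fstar (B : BenefitFun) (α : ℝ) : ℝ :=
  B.f (B.xhat α) - α * B.xhat α

/-- `β̃(n) = (1/n)·κ + ((n−1)/n)·(δ+σ)`. -/
noncomputable def btilde (κ δ σ : ℝ) (n : ℕ) : ℝ :=
  (1 / (n:ℝ)) * κ + (((n:ℝ) - 1) / (n:ℝ)) * (δ + σ)

/-- Feasibility of an allocation `(x, y, Z)`. -/
def Feasible {N : ℕ} (x y : Fin N → ℝ) (Z : Fin N → Fin N → ℝ) : Prop :=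
  ∀ i, 0 ≤ x i ∧ 0 ≤ y i ∧ y i ≤ x i ∧ Z i i = 0 ∧ ∀ j, j ≠ i → 0 ≤ Z i j ∧ Z i j ≤ y j

/-- Social welfare `Π(x, y, Z) = ∑ᵢ (f(xᵢ + dᵢ) − κ xᵢ − δ dᵢ − σ uᵢ)`. -/
noncomputable def SW (B : BenefitFun) (κ δ σ : ℝ) {N : ℕ} (x : Fin N → ℝ)
    (Z : Fin N → Fin N → ℝ) : ℝ :=
  ∑ i, (B.f (x i + ∑ j, Z i j) - κ * x i - δ * (∑ j, Z i j) - σ * (∑ j, Z j i))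

/-! Write `cᵢ = xᵢ + dᵢ` and `T = ∑ᵢ xᵢ`. Since `∑ᵢ dᵢ = ∑ᵢ uᵢ` and `β = (δ + σ) + (κ - δ - σ)/N`,
the welfare rearranges to
  `Π = ∑ᵢ [f(cᵢ) - β cᵢ] - ((κ - δ - σ)/N) ∑ᵢ (T - cᵢ)`.
Feasibility gives `0 ≤ cᵢ ≤ T`, so each summand is at most `f*(β)`, with equality iff `cᵢ = x̂_β`
(strict concavity of `f`) and `cᵢ = T` (as `κ > δ + σ`). The latter says that every peer downloads
everything the others produce, which for `N ≥ 2` forces `yᵢ = xᵢ`. The uniform allocation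
`xᵢ = yᵢ = x̂_β / N` attains the bound, so the maximizers are exactly the allocations attaining it. -/

namespace BenefitFun

variable (B : BenefitFun)

lemma hasDerivAt_f {x : ℝ} (hx : 0 < x) : HasDerivAt B.f (B.f' x) x :=
  (B.hasDeriv x hx.le).hasDerivAt (Ici_mem_nhds hx)

lemma hasDerivAt_f' {x : ℝ} (hx : 0 < x) : HasDerivAt B.f' (B.f'' x) x :=
  (B.hasDeriv' x hx.le).hasDerivAt (Ici_mem_nhds hx)

lemma strictAntiOn_f' : StrictAntiOn B.f' (Set.Ioi 0) := by
  refine strictAntiOn_of_deriv_neg (convex_Ioi 0)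
    (fun x hx => (B.hasDerivAt_f' hx).continuousAt.continuousWithinAt) fun x hx => ?_
  rw [interior_Ioi] at hx
  rw [(B.hasDerivAt_f' hx).deriv]
  exact B.f''_neg x hx

lemma strictConcaveOn_f : StrictConcaveOn ℝ (Set.Ici 0) B.f := by
  refine StrictAntiOn.strictConcaveOn_of_deriv (convex_Ici 0)
    (fun x hx => (B.hasDeriv x hx).continuousWithinAt) ?_
  rw [interior_Ici]
  exact B.strictAntiOn_f'.congr fun x hx => (B.hasDerivAt_f hx).deriv.symm

variable {B} {α γ c T : ℝ}

lemma sub_mul_le_fstar (hα : 0 < α) (hαf : α ≤ B.f' 0) (hc : 0 ≤ c) :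
    B.f c - α * c ≤ B.fstar α :=
  B.xhat_max α hα hαf c hc

lemma sub_mul_eq_fstar_iff (hα : 0 < α) (hαf : α ≤ B.f' 0) (hc : 0 ≤ c) :
    B.f c - α * c = B.fstar α ↔ c = B.xhat α := by
  refine ⟨fun h => ?_, fun h => h ▸ rfl⟩
  have hconc : StrictConcaveOn ℝ (Set.Ici 0) fun t => B.f t - α * t :=
    B.strictConcaveOn_f.sub_convexOn ((convexOn_id (convex_Ici (0 : ℝ))).smul hα.le)
  refine hconc.eq_of_isMaxOn (isMaxOn_iff.mpr fun t ht => ?_)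
    (isMaxOn_iff.mpr fun t ht => sub_mul_le_fstar hα hαf ht) hc (B.xhat_nonneg α hα hαf)
  exact h ▸ sub_mul_le_fstar hα hαf ht

lemma sub_mul_sub_mul_le_fstar (hα : 0 < α) (hαf : α ≤ B.f' 0) (hγ : 0 ≤ γ) (hc : 0 ≤ c)
    (hcT : c ≤ T) : B.f c - α * c - γ * (T - c) ≤ B.fstar α := by
  have := sub_mul_le_fstar hα hαf hc
  have : 0 ≤ γ * (T - c) := mul_nonneg hγ (sub_nonneg.mpr hcT)
  linarith

lemma sub_mul_sub_mul_eq_fstar_iff (hα : 0 < α) (hαf : α ≤ B.f' 0) (hγ : 0 < γ) (hc : 0 ≤ c)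
    (hcT : c ≤ T) : B.f c - α * c - γ * (T - c) = B.fstar α ↔ c = B.xhat α ∧ c = T := by
  have hle := sub_mul_le_fstar hα hαf hc
  have hpen : 0 ≤ γ * (T - c) := mul_nonneg hγ.le (sub_nonneg.mpr hcT)
  rw [← sub_mul_eq_fstar_iff hα hαf hc]
  constructor
  · intro h
    refine ⟨by linarith, ?_⟩
    have : γ * (T - c) = 0 := by linarith
    linarith [(mul_eq_zero.mp this).resolve_left hγ.ne']
  · rintro ⟨h, rfl⟩
    rw [h]
    ring

end BenefitFun

section Welfare

variable {N : ℕ}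

def consumption (x : Fin N → ℝ) (Z : Fin N → Fin N → ℝ) (i : Fin N) : ℝ :=
  x i + ∑ j, Z i j

lemma btilde_sub (κ δ σ : ℝ) (hN : N ≠ 0) :
    btilde κ δ σ N - (δ + σ) = (κ - δ - σ) / N := by
  unfold btilde
  field_simp
  ring

lemma btilde_le {κ δ σ : ℝ} (hN : N ≠ 0) (hcost : δ + σ ≤ κ) : btilde κ δ σ N ≤ κ := by
  have h1 : (1 : ℝ) ≤ N := by exact_mod_cast Nat.one_le_iff_ne_zero.mpr hN
  have := btilde_sub κ δ σ hN
  have : (κ - δ - σ) / N ≤ κ - δ - σ := div_le_self (by linarith) h1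
  linarith

lemma SW_eq_sum (B : BenefitFun) (κ δ σ : ℝ) (hN : N ≠ 0) (x : Fin N → ℝ)
    (Z : Fin N → Fin N → ℝ) :
    SW B κ δ σ x Z = ∑ i, (B.f (consumption x Z i) - btilde κ δ σ N * consumption x Z i
      - (κ - δ - σ) / N * (∑ j, x j - consumption x Z i)) := by
  have hβ := btilde_sub κ δ σ hN
  have hflow : ∑ i, ∑ j, Z j i = ∑ i, ∑ j, Z i j := Finset.sum_comm
  have hT : ∑ _i : Fin N, ∑ j, x j = N * ∑ j, x j := by simp
  unfold SW consumption
  simp only [Finset.sum_sub_distrib, Finset.sum_add_distrib, ← Finset.mul_sum, hflow, hT,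
    mul_add]
  rw [show btilde κ δ σ N = δ + σ + (κ - δ - σ) / N by linarith]
  field_simp
  ring

end Welfare

namespace Feasible

variable {N : ℕ} {x y : Fin N → ℝ} {Z : Fin N → Fin N → ℝ}

lemma consumption_nonneg (h : Feasible x y Z) (i : Fin N) : 0 ≤ consumption x Z i := by
  refine add_nonneg (h i).1 (Finset.sum_nonneg fun j _ => ?_)
  rcases eq_or_ne j i with rfl | hji
  · exact (h j).2.2.2.1.ge
  · exact ((h i).2.2.2.2 j hji).1

lemma Z_le_x_of_ne (h : Feasible x y Z) {i j : Fin N} (hji : j ≠ i) : Z i j ≤ x j :=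
  ((h i).2.2.2.2 j hji).2.trans (h j).2.2.1

lemma consumption_eq_add_sum_erase (h : Feasible x y Z) (i : Fin N) :
    consumption x Z i = x i + ∑ j ∈ Finset.univ.erase i, Z i j := by
  rw [consumption, Finset.sum_erase _ (h i).2.2.2.1]

lemma consumption_le (h : Feasible x y Z) (i : Fin N) : consumption x Z i ≤ ∑ j, x j := by
  rw [h.consumption_eq_add_sum_erase, ← Finset.add_sum_erase _ _ (Finset.mem_univ i)]
  gcongr with j hj
  exact h.Z_le_x_of_ne (Finset.ne_of_mem_erase hj)

lemma consumption_eq_sum_iff (h : Feasible x y Z) (i : Fin N) :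
    consumption x Z i = ∑ j, x j ↔ ∀ j, j ≠ i → Z i j = x j := by
  rw [h.consumption_eq_add_sum_erase, ← Finset.add_sum_erase _ _ (Finset.mem_univ i),
    add_right_inj,
    Finset.sum_eq_sum_iff_of_le fun j hj => h.Z_le_x_of_ne (Finset.ne_of_mem_erase hj)]
  simp only [Finset.mem_erase, Finset.mem_univ, and_true]

lemma forall_consumption_eq_sum_iff (h : Feasible x y Z) (hN : 2 ≤ N) :
    (∀ i, consumption x Z i = ∑ j, x j) ↔ ∀ i, x i = y i ∧ ∀ j, j ≠ i → Z j i = x i := by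
  simp only [h.consumption_eq_sum_iff]
  constructor
  · intro hZ i
    have : Nontrivial (Fin N) := Fin.nontrivial_iff_two_le.mpr hN
    obtain ⟨j, hji⟩ := exists_ne i
    refine ⟨le_antisymm ?_ (h i).2.2.1, fun k hki => hZ k i hki.symm⟩
    -- some other peer downloads all of `xᵢ`, which it can only get from `yᵢ`
    calc x i = Z j i := (hZ j i hji.symm).symm
      _ ≤ y i := ((h j).2.2.2.2 i hji.symm).2
  · exact fun hxy i j hji => (hxy j).2 i hji.symm

end Feasible

section Optimum

variable {B : BenefitFun} {N : ℕ} {κ δ σ : ℝ}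

lemma Feasible.SW_le_fstar {x y : Fin N → ℝ} {Z : Fin N → Fin N → ℝ} (h : Feasible x y Z)
    (hN : N ≠ 0) (hcost : δ + σ ≤ κ) (hβ : 0 < btilde κ δ σ N)
    (hβf : btilde κ δ σ N ≤ B.f' 0) :
    SW B κ δ σ x Z ≤ N * B.fstar (btilde κ δ σ N) :=
  calc SW B κ δ σ x Z = _ := SW_eq_sum B κ δ σ hN x Z
    _ ≤ ∑ _i : Fin N, B.fstar (btilde κ δ σ N) :=
      Finset.sum_le_sum fun i _ => BenefitFun.sub_mul_sub_mul_le_fstar hβ hβf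
        (div_nonneg (by linarith) N.cast_nonneg) (h.consumption_nonneg i) (h.consumption_le i)
    _ = N * B.fstar (btilde κ δ σ N) := by simp

lemma Feasible.SW_eq_fstar_iff {x y : Fin N → ℝ} {Z : Fin N → Fin N → ℝ} (h : Feasible x y Z)
    (hN : 2 ≤ N) (hcost : δ + σ < κ) (hβ : 0 < btilde κ δ σ N)
    (hβf : btilde κ δ σ N ≤ B.f' 0) :
    SW B κ δ σ x Z = N * B.fstar (btilde κ δ σ N) ↔
      (∑ i, x i = B.xhat (btilde κ δ σ N) ∧ ∀ i, x i = y i ∧ ∀ j, j ≠ i → Z j i = x i) := by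
  have hγ : 0 < (κ - δ - σ) / N := div_pos (by linarith) (by positivity)
  rw [SW_eq_sum B κ δ σ (by omega), show (N : ℝ) * B.fstar (btilde κ δ σ N)
      = ∑ _i : Fin N, B.fstar (btilde κ δ σ N) by simp,
    Finset.sum_eq_sum_iff_of_le fun i _ => BenefitFun.sub_mul_sub_mul_le_fstar hβ hβf hγ.le
      (h.consumption_nonneg i) (h.consumption_le i),
    ← h.forall_consumption_eq_sum_iff hN]
  simp only [Finset.mem_univ, forall_const, BenefitFun.sub_mul_sub_mul_eq_fstar_iff hβ hβf hγ
    (h.consumption_nonneg _) (h.consumption_le _)]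
  constructor
  · intro hc
    exact ⟨(hc ⟨0, by omega⟩).2.symm.trans (hc _).1, fun i => (hc i).2⟩
  · rintro ⟨hT, hc⟩ i
    exact ⟨(hc i).trans hT, hc i⟩

lemma exists_feasible_SW_eq_fstar (hN : 2 ≤ N) (hcost : δ + σ < κ) (hβ : 0 < btilde κ δ σ N)
    (hβf : btilde κ δ σ N ≤ B.f' 0) :
    ∃ (x y : Fin N → ℝ) (Z : Fin N → Fin N → ℝ),
      Feasible x y Z ∧ SW B κ δ σ x Z = N * B.fstar (btilde κ δ σ N) := by
  set a := B.xhat (btilde κ δ σ N) / N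
  have ha : 0 ≤ a := div_nonneg (B.xhat_nonneg _ hβ hβf) N.cast_nonneg
  have hfeas : Feasible (fun _ : Fin N => a) (fun _ => a) fun i j => if j = i then 0 else a :=
    fun i => ⟨ha, ha, le_rfl, if_pos rfl, fun j hji => by simp [hji, ha]⟩
  refine ⟨_, _, _, hfeas, (hfeas.SW_eq_fstar_iff hN hcost hβ hβf).mpr ⟨?_, fun i => ⟨rfl, ?_⟩⟩⟩
  · have : (N : ℝ) ≠ 0 := by positivity
    simp [a, field]
  · exact fun j hji => if_neg hji.symm

end Optimum

theorem stmt0_general (B : BenefitFun) (N : ℕ) (hN : 2 ≤ N)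
    (κ δ σ : ℝ) (hδ : 0 < δ) (hσ : 0 < σ)
    (hcost : δ + σ < κ) (hκf : κ < B.f' 0)
    (β : ℝ) (hβ : β = (1 / (N:ℝ)) * κ + (((N:ℝ) - 1) / (N:ℝ)) * (δ + σ))
    (x y : Fin N → ℝ) (Z : Fin N → Fin N → ℝ) (hfeas : Feasible x y Z) :
    ((∀ x' y' : Fin N → ℝ, ∀ Z' : Fin N → Fin N → ℝ, Feasible x' y' Z' →
        SW B κ δ σ x' Z' ≤ SW B κ δ σ x Z)
      ↔ ((∑ i, x i) = B.xhat β ∧ ∀ i, x i = y i ∧ ∀ j, j ≠ i → Z j i = x i))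
    ∧ ((∀ x' y' : Fin N → ℝ, ∀ Z' : Fin N → Fin N → ℝ, Feasible x' y' Z' →
        SW B κ δ σ x' Z' ≤ SW B κ δ σ x Z)
      → SW B κ δ σ x Z = (N:ℝ) * B.fstar β) := by
  obtain rfl : β = btilde κ δ σ N := hβ
  have hN0 : N ≠ 0 := by omega
  have hβpos : 0 < btilde κ δ σ N := by
    have := btilde_sub κ δ σ hN0
    have : 0 < (κ - δ - σ) / N := div_pos (by linarith) (by positivity)
    linarith
  have hβf : btilde κ δ σ N ≤ B.f' 0 := (btilde_le hN0 hcost.le).trans hκf.le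
  obtain ⟨x₀, y₀, Z₀, hfeas₀, hSW₀⟩ := exists_feasible_SW_eq_fstar hN hcost hβpos hβf
  have hmax_iff : (∀ x' y' : Fin N → ℝ, ∀ Z' : Fin N → Fin N → ℝ, Feasible x' y' Z' →
      SW B κ δ σ x' Z' ≤ SW B κ δ σ x Z) ↔ SW B κ δ σ x Z = N * B.fstar (btilde κ δ σ N) :=
    ⟨fun hmax => (hfeas.SW_le_fstar hN0 hcost.le hβpos hβf).antisymm
        (hSW₀ ▸ hmax _ _ _ hfeas₀),
      fun hSW _ _ _ h => hSW ▸ h.SW_le_fstar hN0 hcost.le hβpos hβf⟩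
  rw [hmax_iff]
  exact ⟨hfeas.SW_eq_fstar_iff hN hcost hβpos hβf, id⟩

theorem stmt0 (B : BenefitFun) (N : ℕ) (hN : 2 ≤ N)
    (κ δ σ : ℝ) (hκ : 0 < κ) (hδ : 0 < δ) (hσ : 0 < σ)
    (hcost : δ + σ < κ) (hκf : κ < B.f' 0)
    (β : ℝ) (hβ : β = (1 / (N:ℝ)) * κ + (((N:ℝ) - 1) / (N:ℝ)) * (δ + σ))
    (x y : Fin N → ℝ) (Z : Fin N → Fin N → ℝ) (hfeas : Feasible x y Z) :
    ((∀ x' y' : Fin N → ℝ, ∀ Z' : Fin N → Fin N → ℝ, Feasible x' y' Z' →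
        SW B κ δ σ x' Z' ≤ SW B κ δ σ x Z)
      ↔ ((∑ i, x i) = B.xhat β ∧ ∀ i, x i = y i ∧ ∀ j, j ≠ i → Z j i = x i))
    ∧ ((∀ x' y' : Fin N → ℝ, ∀ Z' : Fin N → Fin N → ℝ, Feasible x' y' Z' →
        SW B κ δ σ x' Z' ≤ SW B κ δ σ x Z)
      → SW B κ δ σ x Z = (N:ℝ) * B.fstar β) :=
  stmt0_general B N hN κ δ σ hδ hσ hcost hκf β hβ x y Z hfeas
end

section
/- For every integer n ≥ 2, 0 < MP(n) − g(n) < x̂_{δ+σ}·(κ − δ − σ)/n. In particular, lim_{n→∞} [MP(n) − g(n)] = 0. -/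
open Filter Finset

/-- `G(n) = n·f*(β̃(n))` (with `G(0) = 0`). -/
noncomputable def Gfun (B : BenefitFun) (κ δ σ : ℝ) (n : ℕ) : ℝ :=
  (n:ℝ) * B.fstar (btilde κ δ σ n)

/-- Marginal product: `MP(n) = G(n) − G(n−1)`, so `MP(1) = G(1)`. -/
noncomputable def MP (B : BenefitFun) (κ δ σ : ℝ) (n : ℕ) : ℝ :=
  Gfun B κ δ σ n - Gfun B κ δ σ (n - 1)

/-! `MP(n) − g(n) = (n − 1)(f*(β̃(n)) − f*(β̃(n − 1)))`. Since `x̂_α` maximises `f(x) − α x`, the convex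
function `f*` lies above its supporting lines: `f*(α) − f*(α') ≤ (α' − α) x̂_α`. Applied in both
directions this squeezes `MP(n) − g(n)` between `(κ − δ − σ)/n · x̂_{β̃(n−1)} > 0` and
`(κ − δ − σ)/n · x̂_{β̃(n)}`, and `x̂` is strictly decreasing with `β̃(n) > δ + σ`. -/

namespace BenefitFun

variable (B : BenefitFun) {α α' : ℝ}

theorem xhat_pos (h0 : 0 < α) (h1 : α < B.f' 0) : 0 < B.xhat α := by
  refine (B.xhat_nonneg α h0 h1.le).lt_of_ne fun h => h1.ne ?_
  rw [← B.xhat_spec α h0 h1.le, ← h]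

theorem fstar_sub_fstar_le (hα : α ∈ Set.Ioc 0 (B.f' 0)) (hα' : α' ∈ Set.Ioc 0 (B.f' 0)) :
    B.fstar α - B.fstar α' ≤ (α' - α) * B.xhat α := by
  have := B.xhat_max α' hα'.1 hα'.2 (B.xhat α) (B.xhat_nonneg α hα.1 hα.2)
  unfold fstar
  linarith

theorem xhat_strictAntiOn : StrictAntiOn B.xhat (Set.Ioc 0 (B.f' 0)) := by
  intro α hα α' hα' hlt
  have hsum : 0 ≤ (α' - α) * (B.xhat α - B.xhat α') := by
    linarith [B.fstar_sub_fstar_le hα hα', B.fstar_sub_fstar_le hα' hα]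
  have hle : B.xhat α' ≤ B.xhat α := sub_nonneg.1 (nonneg_of_mul_nonneg_right hsum (sub_pos.2 hlt))
  refine hle.lt_of_ne fun h => hlt.ne ?_
  rw [← B.xhat_spec α hα.1 hα.2, ← B.xhat_spec α' hα'.1 hα'.2, h]

end BenefitFun

section btilde

variable {κ δ σ : ℝ} {n : ℕ}

theorem btilde_eq (hn : n ≠ 0) : btilde κ δ σ n = δ + σ + (κ - δ - σ) / n := by
  unfold btilde
  field_simp
  ring

theorem btilde_mem_Ioc (hcost : δ + σ < κ) (hn : n ≠ 0) :
    btilde κ δ σ n ∈ Set.Ioc (δ + σ) κ := by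
  rw [btilde_eq hn]
  have hpos : 0 < (κ - δ - σ) / n := div_pos (by linarith) (by positivity)
  have hle : (κ - δ - σ) / n ≤ κ - δ - σ :=
    div_le_self (by linarith) (by exact_mod_cast Nat.one_le_iff_ne_zero.2 hn)
  constructor <;> linarith

theorem pred_mul_btilde_pred_sub_btilde (hn : 2 ≤ n) :
    ((n : ℝ) - 1) * (btilde κ δ σ (n - 1) - btilde κ δ σ n) = (κ - δ - σ) / n := by
  have hn1 : ((n - 1 : ℕ) : ℝ) = n - 1 := Nat.cast_pred (by omega)
  have hn1ne : (n : ℝ) - 1 ≠ 0 := by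
    rw [← hn1]
    exact_mod_cast (by omega : n - 1 ≠ 0)
  rw [btilde_eq (by omega), btilde_eq (by omega), hn1]
  field_simp
  ring

end btilde

theorem MP_sub_fstar_btilde (B : BenefitFun) (κ δ σ : ℝ) {n : ℕ} (hn : n ≠ 0) :
    MP B κ δ σ n - B.fstar (btilde κ δ σ n) =
      ((n : ℝ) - 1) * (B.fstar (btilde κ δ σ n) - B.fstar (btilde κ δ σ (n - 1))) := by
  unfold MP Gfun
  rw [Nat.cast_pred (Nat.pos_of_ne_zero hn)]
  ring

theorem MP_sub_fstar_btilde_bounds (B : BenefitFun) {κ δ σ : ℝ} (hds : 0 < δ + σ)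
    (hcost : δ + σ < κ) (hκf : κ ≤ B.f' 0) {n : ℕ} (hn : 2 ≤ n) :
    (κ - δ - σ) / n * B.xhat (btilde κ δ σ (n - 1)) ≤ MP B κ δ σ n - B.fstar (btilde κ δ σ n) ∧
      MP B κ δ σ n - B.fstar (btilde κ δ σ n) ≤ (κ - δ - σ) / n * B.xhat (btilde κ δ σ n) := by
  have mem : ∀ m : ℕ, m ≠ 0 → btilde κ δ σ m ∈ Set.Ioc 0 (B.f' 0) := fun m hm =>
    Set.Ioc_subset_Ioc hds.le hκf (btilde_mem_Ioc hcost hm)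
  have hmem := mem n (by omega)
  have hmem' := mem (n - 1) (by omega)
  have hn1 : (0 : ℝ) ≤ n - 1 := by
    have : (2 : ℝ) ≤ n := by exact_mod_cast hn
    linarith
  rw [MP_sub_fstar_btilde B κ δ σ (by omega), ← pred_mul_btilde_pred_sub_btilde hn]
  constructor
  · have := mul_le_mul_of_nonneg_left (B.fstar_sub_fstar_le hmem' hmem) hn1
    linarith
  · have := mul_le_mul_of_nonneg_left (B.fstar_sub_fstar_le hmem hmem') hn1
    linarith

theorem stmt4_general (B : BenefitFun)
    (κ δ σ : ℝ) (hδ : 0 < δ) (hσ : 0 < σ)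
    (hcost : δ + σ < κ) (hκf : κ < B.f' 0) :
    (∀ n : ℕ, 2 ≤ n →
      0 < MP B κ δ σ n - B.fstar (btilde κ δ σ n)
      ∧ MP B κ δ σ n - B.fstar (btilde κ δ σ n) < B.xhat (δ + σ) * (κ - δ - σ) / (n:ℝ))
    ∧ Filter.Tendsto (fun n : ℕ => MP B κ δ σ n - B.fstar (btilde κ δ σ n))
        Filter.atTop (nhds 0) := by
  have hds : 0 < δ + σ := add_pos hδ hσ
  have bounds : ∀ n : ℕ, 2 ≤ n →
      0 < MP B κ δ σ n - B.fstar (btilde κ δ σ n)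
      ∧ MP B κ δ σ n - B.fstar (btilde κ δ σ n) < B.xhat (δ + σ) * (κ - δ - σ) / (n:ℝ) := by
    intro n hn
    obtain ⟨hlow, hup⟩ := MP_sub_fstar_btilde_bounds B hds hcost hκf.le hn
    have hc : 0 < (κ - δ - σ) / n := div_pos (by linarith) (by positivity)
    have hb := btilde_mem_Ioc hcost (by omega : n ≠ 0)
    have hb' := btilde_mem_Ioc hcost (by omega : n - 1 ≠ 0)
    have hxpos : 0 < B.xhat (btilde κ δ σ (n - 1)) :=
      B.xhat_pos (hds.trans hb'.1) (hb'.2.trans_lt hκf)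
    have hxlt : B.xhat (btilde κ δ σ n) < B.xhat (δ + σ) :=
      B.xhat_strictAntiOn ⟨hds, hcost.le.trans hκf.le⟩
        ⟨hds.trans hb.1, hb.2.trans hκf.le⟩ hb.1
    refine ⟨(mul_pos hc hxpos).trans_le hlow, hup.trans_lt ?_⟩
    rw [mul_div_assoc, mul_comm (B.xhat _)]
    exact mul_lt_mul_of_pos_left hxlt hc
  refine ⟨bounds, squeeze_zero' ?_ ?_
    (tendsto_const_div_atTop_nhds_zero_nat (B.xhat (δ + σ) * (κ - δ - σ)))⟩
  · filter_upwards [eventually_ge_atTop 2] with n hn using (bounds n hn).1.le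
  · filter_upwards [eventually_ge_atTop 2] with n hn using (bounds n hn).2.le

theorem stmt4 (B : BenefitFun)
    (κ δ σ : ℝ) (hκ : 0 < κ) (hδ : 0 < δ) (hσ : 0 < σ)
    (hcost : δ + σ < κ) (hκf : κ < B.f' 0) :
    (∀ n : ℕ, 2 ≤ n →
      0 < MP B κ δ σ n - B.fstar (btilde κ δ σ n)
      ∧ MP B κ δ σ n - B.fstar (btilde κ δ σ n) < B.xhat (δ + σ) * (κ - δ - σ) / (n:ℝ))
    ∧ Filter.Tendsto (fun n : ℕ => MP B κ δ σ n - B.fstar (btilde κ δ σ n))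
        Filter.atTop (nhds 0) :=
  stmt4_general B κ δ σ hδ hσ hcost hκf
end

section
/- The equal-split utility vector u with u_i = f*(β) for all i ∈ {1,…,N} is in the core of the coalitional game v, i.e., ∑_{i=1}^N u_i = N·f*(β) = v({1,…,N}) and ∑_{i∈S} u_i = |S|·f*(β) ≥ |S|·f*(β̃(|S|)) = v(S) for every nonempty S ⊆ {1,…,N}. Moreover, this utility vector is attained at the symmetric Pareto efficient allocation x_i = y_i = z_{ji} = x̂_β/N for all j ≠ i and all i, i.e., at that allocation v_i(x, y, Z) = f(x_i + d_i) − κ·x_i − δ·d_i − σ·u_i equals f*(β) for every i. -/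
open Filter Finset

/-- Peer `i`'s utility `vᵢ(x, y, Z) = f(xᵢ + dᵢ) − κ xᵢ − δ dᵢ − σ uᵢ`,
where `dᵢ = ∑ⱼ z_{ij}` and `uᵢ = ∑ⱼ z_{ji}`. -/
noncomputable def util (B : BenefitFun) (κ δ σ : ℝ) {N : ℕ} (x : Fin N → ℝ)
    (Z : Fin N → Fin N → ℝ) (i : Fin N) : ℝ :=
  B.f (x i + ∑ j, Z i j) - κ * x i - δ * (∑ j, Z i j) - σ * (∑ j, Z j i)

/-- The coalitional game `v(S) = |S|·f*(β̃(|S|))` (so `v(∅) = 0`). -/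
noncomputable def vgame (B : BenefitFun) (κ δ σ : ℝ) {N : ℕ} (S : Finset (Fin N)) : ℝ :=
  (S.card : ℝ) * B.fstar (btilde κ δ σ S.card)

/-! Since `κ > δ + σ`, the average marginal cost `β̃(n) = δ + σ + (κ − δ − σ)/n` decreases in the
coalition size `n`, and `f*` is antitone, so `f*(β) = f*(β̃(N)) ≥ f*(β̃(|S|))` for every coalition `S`.
In the symmetric allocation each peer produces `x̂_β/N` and downloads and uploads `(N − 1)x̂_β/N`, so it
consumes `x̂_β` at total cost `β x̂_β`, i.e. its utility is `f*(β)`. -/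

theorem BenefitFun.fstar_le_fstar (B : BenefitFun) {a b : ℝ} (ha : 0 < a) (hab : a ≤ b)
    (hb : b ≤ B.f' 0) : B.fstar b ≤ B.fstar a := by
  have hx : 0 ≤ B.xhat b := B.xhat_nonneg b (ha.trans_le hab) hb
  calc B.fstar b ≤ B.f (B.xhat b) - a * B.xhat b := by
        unfold BenefitFun.fstar; nlinarith
    _ ≤ B.fstar a := B.xhat_max a ha (hab.trans hb) _ hx

section btilde

variable {κ δ σ : ℝ}

theorem btilde_eq_add_div {n : ℕ} (hn : n ≠ 0) :
    btilde κ δ σ n = (δ + σ) + (κ - (δ + σ)) / n := by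
  unfold btilde
  field_simp
  ring

theorem btilde_one : btilde κ δ σ 1 = κ := by
  simp [btilde]

theorem btilde_le_btilde (hcost : δ + σ ≤ κ) {m n : ℕ} (hm : 0 < m) (hmn : m ≤ n) :
    btilde κ δ σ n ≤ btilde κ δ σ m := by
  rw [btilde_eq_add_div hm.ne', btilde_eq_add_div (hm.trans_le hmn).ne']
  gcongr

theorem btilde_pos (hδσ : 0 < δ + σ) (hcost : δ + σ ≤ κ) {n : ℕ} (hn : n ≠ 0) :
    0 < btilde κ δ σ n := by
  rw [btilde_eq_add_div hn]
  have : 0 ≤ (κ - (δ + σ)) / n := div_nonneg (by linarith) n.cast_nonneg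
  linarith

end btilde

theorem vgame_le_card_mul_fstar (B : BenefitFun) {κ δ σ : ℝ} (hδσ : 0 < δ + σ)
    (hcost : δ + σ ≤ κ) (hκf : κ ≤ B.f' 0) {N : ℕ} {S : Finset (Fin N)} (hS : S.Nonempty) :
    vgame B κ δ σ S ≤ S.card * B.fstar (btilde κ δ σ N) := by
  have hS₀ : 0 < S.card := hS.card_pos
  have hSN : S.card ≤ N := (card_le_univ S).trans_eq (Fintype.card_fin N)
  have hS₁ : btilde κ δ σ S.card ≤ B.f' 0 := by
    calc btilde κ δ σ S.card ≤ btilde κ δ σ 1 := btilde_le_btilde hcost one_pos hS₀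
      _ = κ := btilde_one
      _ ≤ B.f' 0 := hκf
  unfold vgame
  gcongr
  exact B.fstar_le_fstar (btilde_pos hδσ hcost (hS₀.trans_le hSN).ne')
    (btilde_le_btilde hcost hS₀ hSN) hS₁

theorem sum_ite_eq_zero_else {ι R : Type*} [Fintype ι] [DecidableEq ι] [CommRing R]
    (i : ι) (c : R) :
    ∑ j, (if i = j then 0 else c) = (Fintype.card ι - 1) * c := by
  have h : ∀ j, (if i = j then 0 else c) = c - if i = j then c else 0 := fun j => by
    split_ifs <;> ring
  simp only [h, sum_sub_distrib, sum_ite_eq, mem_univ, if_true, sum_const, card_univ, nsmul_eq_mul]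
  ring

theorem util_symmetric (B : BenefitFun) (κ δ σ : ℝ) {N : ℕ} (X : ℝ) (i : Fin N) :
    util B κ δ σ (fun _ => X / N) (fun j k => if j = k then 0 else X / N) i
      = B.f X - btilde κ δ σ N * X := by
  have hN : (N : ℝ) ≠ 0 := Nat.cast_ne_zero.mpr (Fin.pos i).ne'
  have hcol : ∑ j, (if j = i then 0 else X / N) = ∑ j, (if i = j then 0 else X / N) := by
    simp_rw [eq_comm]
  have hdemand : X / N + (N - 1) * (X / N) = X := by field_simp; ring
  simp only [util, hcol, sum_ite_eq_zero_else, Fintype.card_fin, hdemand, btilde]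
  field_simp
  ring

theorem stmt7_general (B : BenefitFun) (N : ℕ)
    (κ δ σ : ℝ) (hδ : 0 < δ) (hσ : 0 < σ)
    (hcost : δ + σ < κ) (hκf : κ < B.f' 0)
    (β : ℝ) (hβ : β = (1 / (N:ℝ)) * κ + (((N:ℝ) - 1) / (N:ℝ)) * (δ + σ)) :
    ((∑ _i : Fin N, B.fstar β) = (N:ℝ) * B.fstar β)
    ∧ (N:ℝ) * B.fstar β = vgame B κ δ σ (Finset.univ : Finset (Fin N))
    ∧ (∀ S : Finset (Fin N), S.Nonempty →
        (∑ _i ∈ S, B.fstar β) = (S.card : ℝ) * B.fstar β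
        ∧ vgame B κ δ σ S ≤ (S.card : ℝ) * B.fstar β)
    ∧ (∀ i : Fin N,
        util B κ δ σ (fun _ => B.xhat β / (N:ℝ))
          (fun j k => if j = k then 0 else B.xhat β / (N:ℝ)) i = B.fstar β) := by
  obtain rfl : β = btilde κ δ σ N := hβ
  refine ⟨by simp, by simp [vgame], fun S hS => ⟨by simp, ?_⟩, fun i => ?_⟩
  · exact vgame_le_card_mul_fstar B (by linarith) hcost.le hκf.le hS
  · exact util_symmetric B κ δ σ _ i

theorem stmt7 (B : BenefitFun) (N : ℕ) (hN : 2 ≤ N)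
    (κ δ σ : ℝ) (hκ : 0 < κ) (hδ : 0 < δ) (hσ : 0 < σ)
    (hcost : δ + σ < κ) (hκf : κ < B.f' 0)
    (β : ℝ) (hβ : β = (1 / (N:ℝ)) * κ + (((N:ℝ) - 1) / (N:ℝ)) * (δ + σ)) :
    ((∑ _i : Fin N, B.fstar β) = (N:ℝ) * B.fstar β)
    ∧ (N:ℝ) * B.fstar β = vgame B κ δ σ (Finset.univ : Finset (Fin N))
    ∧ (∀ S : Finset (Fin N), S.Nonempty →
        (∑ _i ∈ S, B.fstar β) = (S.card : ℝ) * B.fstar β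
        ∧ vgame B κ δ σ S ≤ (S.card : ℝ) * B.fstar β)
    ∧ (∀ i : Fin N,
        util B κ δ σ (fun _ => B.xhat β / (N:ℝ))
          (fun j k => if j = k then 0 else B.xhat β / (N:ℝ)) i = B.fstar β) :=
  stmt7_general B N κ δ σ hδ hσ hcost hκf β hβ
end

section
/- Let y^e ∈ ℝ^N with y_i^e ≥ 0 for all i and x̂_κ ≤ ∑_{i=1}^N y_i^e ≤ x̂_δ, and for each i set D_i := ∑_{j≠i} y_j^e. Then for each i, the pair (x, d) = (y_i^e, D_i) is the unique maximizer of f(x + d) − κ·x − δ·d over the set {(x, d) ∈ ℝ² : x ≥ y_i^e, 0 ≤ d ≤ D_i}. (Equivalently: when the protocol designer enforces sharing levels y^e, each peer produces exactly its enforced sharing level and downloads all content shared by others.) -/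
open Filter Finset

lemma mvt_aux (g g' : ℝ → ℝ)
    (hg : ∀ x ∈ Set.Ici (0:ℝ), HasDerivWithinAt g (g' x) (Set.Ici 0) x)
    (a b : ℝ) (ha : 0 ≤ a) (hab : a < b) :
    ∃ c ∈ Set.Ioo a b, g b - g a = g' c * (b - a) := by
  have hcont : ContinuousOn g (Set.Icc a b) := by
    intro x hx
    exact ((hg x (le_trans ha hx.1)).continuousWithinAt).mono
      (fun y hy => le_trans ha hy.1)
  have hderiv : ∀ x ∈ Set.Ioo a b, HasDerivAt g (g' x) x := by
    intro x hx
    have hx0 : 0 < x := lt_of_le_of_lt ha hx.1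
    exact (hg x hx0.le).hasDerivAt (Ici_mem_nhds hx0)
  obtain ⟨c, hc, hc2⟩ := exists_hasDerivAt_eq_slope g g' hab hcont hderiv
  refine ⟨c, hc, ?_⟩
  rw [hc2, div_mul_cancel₀ _ (sub_ne_zero.2 hab.ne')]

lemma f'_strictAnti (B : BenefitFun) {a b : ℝ} (ha : 0 ≤ a) (hab : a < b) :
    B.f' b < B.f' a := by
  obtain ⟨c, hc, hc2⟩ := mvt_aux B.f' B.f'' B.hasDeriv' a b ha hab
  have hc0 : 0 < c := lt_of_le_of_lt ha hc.1
  nlinarith [B.f''_neg c hc0, hc.1, hc.2]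

/-- Strict tangent-line inequality for the concave `f`. -/
lemma tangent_lt (B : BenefitFun) {s t : ℝ} (hs : 0 < s) (ht : 0 ≤ t) (hne : t ≠ s) :
    B.f t < B.f s + B.f' s * (t - s) := by
  rcases lt_or_gt_of_ne hne with h | h
  · obtain ⟨c, hc, hc2⟩ := mvt_aux B.f B.f' B.hasDeriv t s ht h
    have : B.f' s < B.f' c := f'_strictAnti B (le_trans ht hc.1.le) hc.2
    nlinarith
  · obtain ⟨c, hc, hc2⟩ := mvt_aux B.f B.f' B.hasDeriv s t hs.le h
    have : B.f' c < B.f' s := f'_strictAnti B hs.le hc.1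
    nlinarith

lemma tangent_le (B : BenefitFun) {s t : ℝ} (hs : 0 < s) (ht : 0 ≤ t) :
    B.f t ≤ B.f s + B.f' s * (t - s) := by
  rcases eq_or_ne t s with rfl | hne
  · simp
  · exact (tangent_lt B hs ht hne).le

theorem stmt9 (B : BenefitFun) (N : ℕ) (hN : 2 ≤ N)
    (κ δ σ : ℝ) (hκ : 0 < κ) (hδ : 0 < δ) (hσ : 0 < σ)
    (hcost : δ + σ < κ) (hκf : κ < B.f' 0)
    (ye : Fin N → ℝ) (hye : ∀ i, 0 ≤ ye i)
    (hlo : B.xhat κ ≤ ∑ i, ye i) (hhi : (∑ i, ye i) ≤ B.xhat δ) :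
    ∀ i : Fin N,
      ∀ x d : ℝ, ye i ≤ x → 0 ≤ d → d ≤ (∑ j ∈ Finset.univ.erase i, ye j) →
        (B.f (x + d) - κ * x - δ * d
            ≤ B.f (ye i + ∑ j ∈ Finset.univ.erase i, ye j) - κ * ye i
              - δ * (∑ j ∈ Finset.univ.erase i, ye j)
        ∧ (B.f (x + d) - κ * x - δ * d
              = B.f (ye i + ∑ j ∈ Finset.univ.erase i, ye j) - κ * ye i
                - δ * (∑ j ∈ Finset.univ.erase i, ye j)
            → x = ye i ∧ d = (∑ j ∈ Finset.univ.erase i, ye j))) := by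
  have hδf : δ ≤ B.f' 0 := le_of_lt (lt_trans (by linarith) hκf)
  have hδ' : 0 < δ := hδ
  have hδκ : δ < κ := by linarith
  -- x̂_κ > 0
  have hxκ : 0 < B.xhat κ := by
    rcases (B.xhat_nonneg κ hκ hκf.le).lt_or_eq with h | h
    · exact h
    · exfalso
      have := B.xhat_spec κ hκ hκf.le
      rw [← h] at this
      linarith
  intro i x d hx hd hdD
  set D := ∑ j ∈ Finset.univ.erase i, ye j with hD
  have hDnn : 0 ≤ D := Finset.sum_nonneg fun j _ => hye j
  have hsum : ye i + D = ∑ j, ye j := by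
    rw [hD, add_comm]
    exact Finset.sum_erase_add _ _ (Finset.mem_univ i)
  set s : ℝ := ye i + D with hsdef
  have hs0 : 0 < s := lt_of_lt_of_le hxκ (hsum ▸ hlo)
  -- f'(s) bounds
  have hf'le : B.f' s ≤ κ := by
    rw [← B.xhat_spec κ hκ hκf.le]
    rcases eq_or_lt_of_le (hsum ▸ hlo : B.xhat κ ≤ s) with h | h
    · rw [h]
    · exact (f'_strictAnti B (B.xhat_nonneg κ hκ hκf.le) h).le
  have hf'ge : δ ≤ B.f' s := by
    rw [← B.xhat_spec δ hδ hδf]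
    rcases eq_or_lt_of_le (hsum ▸ hhi : s ≤ B.xhat δ) with h | h
    · rw [h]
    · exact (f'_strictAnti B hs0.le h).le
  have ht0 : 0 ≤ x + d := by
    have := hye i; linarith
  have hA : B.f (x + d) ≤ B.f s + B.f' s * ((x + d) - s) :=
    tangent_le B hs0 ht0
  have hBle : (B.f' s - κ) * (x - ye i) ≤ 0 :=
    mul_nonpos_of_nonpos_of_nonneg (by linarith) (by linarith)
  have hCle : (B.f' s - δ) * (d - D) ≤ 0 :=
    mul_nonpos_of_nonneg_of_nonpos (by linarith) (by linarith)
  constructor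
  · nlinarith [hA, hBle, hCle]
  · intro heq
    -- equality forces tangent equality, so x+d = s
    have hts : x + d = s := by
      by_contra hne
      have := tangent_lt B hs0 ht0 hne
      nlinarith
    have hxye : x = ye i := by nlinarith [hA, hts]
    exact ⟨hxye, by linarith [hts, hxye]⟩
end

section
/- Suppose N* divides N. Then the core of the coalitional game v^FS consists of exactly one element: the vector u ∈ ℝ^N with u_i = g^FS(N*) for every i ∈ {1,…,N}. -/
open Filter Finset

/-- `x̃_α`: the maximizer of `f(x) − α x` over `x ≥ 0`
(`x̂_α` if `α ≤ f'(0)`, and `0` otherwise). -/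
noncomputable def xtil (B : BenefitFun) (α : ℝ) : ℝ :=
  if α ≤ B.f' 0 then B.xhat α else 0

/-- `g^FS(n) = f(x̃_{γ̃(n)}) − β̃(n)·x̃_{γ̃(n)}` for `n ≥ 1`, with `γ̃(n) = κ + (n−1)σ`,
and `g^FS(0) = 0`. -/
noncomputable def gFS (B : BenefitFun) (κ δ σ : ℝ) (n : ℕ) : ℝ :=
  if n = 0 then 0
  else B.f (xtil B (κ + ((n:ℝ) - 1) * σ)) - btilde κ δ σ n * xtil B (κ + ((n:ℝ) - 1) * σ)

/-- `v^FS(S) = ⌊|S|/N*⌋·N*·g^FS(N*) + r·g^FS(r)` where `r = |S| mod N*`. -/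
noncomputable def vFS (B : BenefitFun) (κ δ σ : ℝ) (Nstar : ℕ) {N : ℕ}
    (S : Finset (Fin N)) : ℝ :=
  ((S.card / Nstar : ℕ) : ℝ) * (Nstar : ℝ) * gFS B κ δ σ Nstar
    + ((S.card % Nstar : ℕ) : ℝ) * gFS B κ δ σ (S.card % Nstar)

/-- `u` is in the core of the set function `w`:
`∑ᵢ uᵢ = w({1,…,N})` and `∑_{i∈S} uᵢ ≥ w(S)` for every `S`. -/
def InCore {N : ℕ} (w : Finset (Fin N) → ℝ) (u : Fin N → ℝ) : Prop :=
  (∑ i, u i) = w Finset.univ ∧ ∀ S : Finset (Fin N), w S ≤ ∑ i ∈ S, u i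

/-!
Every coalition `S` earns at most `|S| · g^FS(N*)`, since each leftover block of size `r` earns
`r · g^FS(r) ≤ r · g^FS(N*)`, with equality as soon as `N*` divides `|S|`. Hence a core
allocation gives exactly `|S| · g^FS(N*)` to every coalition whose size is a multiple of `N*`:
the coalition is blocked from below by its own value and from above by the value of its
complement. Comparing the two coalitions `insert i T` and `insert j T` of size `N*` shows that
all players receive the same payoff, which efficiency then pins down to `g^FS(N*)`.
-/

theorem Finset.apply_eq_of_forall_card_eq_sum_eq {α : Type*} [Fintype α] [DecidableEq α]
    {u : α → ℝ} {m : ℕ} {a : ℝ} (hm : 0 < m) (hmα : m < Fintype.card α)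
    (hsum : ∀ S : Finset α, S.card = m → ∑ k ∈ S, u k = a) (i j : α) : u i = u j := by
  rcases eq_or_ne i j with rfl | hij
  · rfl
  have hi : i ∈ univ.erase j := mem_erase.2 ⟨hij, mem_univ i⟩
  have hcard : ((univ.erase j).erase i).card = Fintype.card α - 2 := by
    rw [card_erase_of_mem hi, card_erase_of_mem (mem_univ j), card_univ]
    omega
  obtain ⟨T, hT, hTcard⟩ := exists_subset_card_eq (s := (univ.erase j).erase i) (n := m - 1)
    (by omega)
  have hiT : i ∉ T := fun h => notMem_erase i _ (hT h)
  have hjT : j ∉ T := fun h => notMem_erase j _ (mem_of_mem_erase (hT h))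
  have hTi := hsum (insert i T) (by rw [card_insert_of_notMem hiT]; omega)
  have hTj := hsum (insert j T) (by rw [card_insert_of_notMem hjT]; omega)
  rw [sum_insert hiT] at hTi
  rw [sum_insert hjT] at hTj
  linarith

section Core

variable {N m : ℕ} {w : Finset (Fin N) → ℝ} {u : Fin N → ℝ} {c : ℝ}

theorem InCore.sum_eq_of_dvd_card (hu : InCore w u) (hmN : m ∣ N)
    (hw : ∀ S : Finset (Fin N), m ∣ S.card → w S = S.card * c)
    {S : Finset (Fin N)} (hS : m ∣ S.card) : ∑ k ∈ S, u k = S.card * c := by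
  have hcard : S.card + Sᶜ.card = N := by simp
  have hSc : m ∣ Sᶜ.card := (Nat.dvd_add_right hS).mp (hcard.symm ▸ hmN)
  have hS_le : S.card * c ≤ ∑ k ∈ S, u k := hw S hS ▸ hu.2 S
  have hSc_le : Sᶜ.card * c ≤ ∑ k ∈ Sᶜ, u k := hw Sᶜ hSc ▸ hu.2 Sᶜ
  have htotal : ∑ k ∈ S, u k + ∑ k ∈ Sᶜ, u k = ((S.card + Sᶜ.card : ℕ) : ℝ) * c := by
    rw [sum_add_sum_compl, hu.1, hw univ (by simpa using hmN), hcard, card_univ,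
      Fintype.card_fin]
  push_cast at htotal
  linarith

theorem inCore_iff_eq_const (hmN : m ∣ N) (hmN_lt : m < N)
    (hle : ∀ S : Finset (Fin N), w S ≤ S.card * c)
    (heq : ∀ S : Finset (Fin N), m ∣ S.card → w S = S.card * c) :
    InCore w u ↔ ∀ i, u i = c := by
  have hm : 0 < m := Nat.pos_of_ne_zero fun h => by simp_all
  have hN : (0 : ℝ) < N := by exact_mod_cast hm.trans hmN_lt
  have hw_univ : w univ = N * c := by simpa using heq univ (by simpa using hmN)
  constructor
  · intro hu i
    have hconst (j : Fin N) : u j = u i :=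
      Finset.apply_eq_of_forall_card_eq_sum_eq (a := m * c) hm (by simpa using hmN_lt)
        (fun S hS => by rw [hu.sum_eq_of_dvd_card hmN heq (by rw [hS]), hS]) j i
    have hsum : (N : ℝ) * u i = N * c := by
      rw [← hw_univ, ← hu.1, sum_congr rfl fun j _ => hconst j, sum_const, card_univ,
        Fintype.card_fin, nsmul_eq_mul]
    exact mul_left_cancel₀ hN.ne' hsum
  · intro hu
    have hsum (S : Finset (Fin N)) : ∑ k ∈ S, u k = S.card * c := by
      rw [sum_congr rfl fun k _ => hu k, sum_const, nsmul_eq_mul]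
    refine ⟨by rw [hsum, hw_univ, card_univ, Fintype.card_fin], fun S => ?_⟩
    rw [hsum]
    exact hle S

end Core

section vFS

variable {B : BenefitFun} {κ δ σ : ℝ} {Nstar N : ℕ}

@[simp]
theorem gFS_zero : gFS B κ δ σ 0 = 0 := by
  simp [gFS]

theorem vFS_le_card_mul (hmax : ∀ n : ℕ, 0 < n → gFS B κ δ σ n ≤ gFS B κ δ σ Nstar)
    (S : Finset (Fin N)) : vFS B κ δ σ Nstar S ≤ S.card * gFS B κ δ σ Nstar := by
  have hrem (r : ℕ) : (r : ℝ) * gFS B κ δ σ r ≤ r * gFS B κ δ σ Nstar := by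
    rcases Nat.eq_zero_or_pos r with rfl | hr
    · simp
    · exact mul_le_mul_of_nonneg_left (hmax r hr) r.cast_nonneg
  calc vFS B κ δ σ Nstar S
      ≤ ((S.card / Nstar : ℕ) : ℝ) * Nstar * gFS B κ δ σ Nstar
          + ((S.card % Nstar : ℕ) : ℝ) * gFS B κ δ σ Nstar :=
        add_le_add le_rfl (hrem _)
    _ = ((Nstar * (S.card / Nstar) + S.card % Nstar : ℕ) : ℝ) * gFS B κ δ σ Nstar := by
        push_cast; ring
    _ = S.card * gFS B κ δ σ Nstar := by rw [Nat.div_add_mod]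

theorem vFS_of_dvd_card {S : Finset (Fin N)} (hS : Nstar ∣ S.card) :
    vFS B κ δ σ Nstar S = S.card * gFS B κ δ σ Nstar := by
  rw [vFS, Nat.mod_eq_zero_of_dvd hS, gFS_zero, mul_zero, add_zero,
    ← Nat.cast_mul, Nat.div_mul_cancel hS]

end vFS

theorem stmt15_general (B : BenefitFun) (N : ℕ)
    (κ δ σ : ℝ)
    (Nstar : ℕ) (hNsN : Nstar < N)
    (hopt : ∀ n : ℕ, 0 < n → n ≠ Nstar → gFS B κ δ σ n < gFS B κ δ σ Nstar)
    (hdvd : Nstar ∣ N) :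
    ∀ u : Fin N → ℝ,
      InCore (vFS B κ δ σ Nstar) u ↔ ∀ i, u i = gFS B κ δ σ Nstar := by
  have hmax (n : ℕ) (hn : 0 < n) : gFS B κ δ σ n ≤ gFS B κ δ σ Nstar := by
    rcases eq_or_ne n Nstar with rfl | hne
    · rfl
    · exact (hopt n hn hne).le
  exact fun _ => inCore_iff_eq_const hdvd hNsN (vFS_le_card_mul hmax) fun _ => vFS_of_dvd_card

theorem stmt15 (B : BenefitFun) (N : ℕ) (hN : 2 ≤ N)
    (κ δ σ : ℝ) (hκ : 0 < κ) (hδ : 0 < δ) (hσ : 0 < σ)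
    (hcost : δ + σ < κ) (hκf : κ < B.f' 0)
    (Nstar : ℕ) (hNs : 0 < Nstar) (hNsN : Nstar < N)
    (hopt : ∀ n : ℕ, 0 < n → n ≠ Nstar → gFS B κ δ σ n < gFS B κ δ σ Nstar)
    (hdvd : Nstar ∣ N) :
    ∀ u : Fin N → ℝ,
      InCore (vFS B κ δ σ Nstar) u ↔ ∀ i, u i = gFS B κ δ σ Nstar :=
  stmt15_general B N κ δ σ Nstar hNsN hopt hdvd
end

section
/- Suppose N* does not divide N. Then the core of the coalitional game v^FS is empty. -/
open Filter Finset

lemma card_filter_val_lt (n k : ℕ) (hk : k ≤ n) :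
    (Finset.univ.filter fun t : Fin n => (t : ℕ) < k).card = k := by
  rw [← Fintype.card_subtype]
  have e : {t : Fin n // (t : ℕ) < k} ≃ Fin k :=
    { toFun := fun t => ⟨t.1, t.2⟩
      invFun := fun t => ⟨⟨t.1, lt_of_lt_of_le t.2 hk⟩, t.2⟩
      left_inv := fun t => rfl
      right_inv := fun t => rfl }
  rw [Fintype.card_congr e, Fintype.card_fin]

lemma card_filter_sub_lt (n k : ℕ) [NeZero n] (hk : k ≤ n) (j : Fin n) :
    (Finset.univ.filter fun i : Fin n => ((i - j : Fin n) : ℕ) < k).card = k := by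
  have himg : (Finset.univ.filter fun i : Fin n => ((i - j : Fin n) : ℕ) < k)
      = (Finset.univ.filter fun t : Fin n => (t : ℕ) < k).image (fun t => t + j) := by
    ext i
    simp only [Finset.mem_filter, Finset.mem_image, Finset.mem_univ, true_and]
    constructor
    · intro h; exact ⟨i - j, h, by abel⟩
    · rintro ⟨t, ht, rfl⟩; simpa using ht
  rw [himg, Finset.card_image_of_injective _ (add_left_injective j),
    card_filter_val_lt n k hk]

lemma card_filter_sub_lt' (n k : ℕ) [NeZero n] (hk : k ≤ n) (i : Fin n) :
    (Finset.univ.filter fun j : Fin n => ((i - j : Fin n) : ℕ) < k).card = k := by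
  have himg : (Finset.univ.filter fun j : Fin n => ((i - j : Fin n) : ℕ) < k)
      = (Finset.univ.filter fun t : Fin n => (t : ℕ) < k).image (fun t => i - t) := by
    ext j
    simp only [Finset.mem_filter, Finset.mem_image, Finset.mem_univ, true_and]
    constructor
    · intro h; exact ⟨i - j, h, by abel⟩
    · rintro ⟨t, ht, rfl⟩; simpa using ht
  rw [himg, Finset.card_image_of_injective _ sub_right_injective,
    card_filter_val_lt n k hk]

theorem stmt16 (B : BenefitFun) (N : ℕ) (hN : 2 ≤ N)
    (κ δ σ : ℝ) (hκ : 0 < κ) (hδ : 0 < δ) (hσ : 0 < σ)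
    (hcost : δ + σ < κ) (hκf : κ < B.f' 0)
    (Nstar : ℕ) (hNs : 0 < Nstar) (hNsN : Nstar < N)
    (hopt : ∀ n : ℕ, 0 < n → n ≠ Nstar → gFS B κ δ σ n < gFS B κ δ σ Nstar)
    (hndvd : ¬ Nstar ∣ N) :
    ¬ ∃ u : Fin N → ℝ, InCore (vFS B κ δ σ Nstar) u := by
  haveI : NeZero N := ⟨by omega⟩
  rintro ⟨u, hsum, hcore⟩
  set r : ℕ := N % Nstar with hrdef
  have hr0 : 0 < r := Nat.pos_of_ne_zero fun h => hndvd (Nat.dvd_of_mod_eq_zero h)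
  have hrlt : r < Nstar := Nat.mod_lt _ hNs
  have hgr : gFS B κ δ σ r < gFS B κ δ σ Nstar := hopt r hr0 (by omega)
  have hNsle : Nstar ≤ N := le_of_lt hNsN
  -- each cyclic coalition gives a lower bound
  have hSval : ∀ j : Fin N, (Nstar : ℝ) * gFS B κ δ σ Nstar ≤
      ∑ i ∈ Finset.univ.filter (fun i : Fin N => ((i - j : Fin N) : ℕ) < Nstar), u i := by
    intro j
    have hcard := card_filter_sub_lt N Nstar hNsle j
    have h := hcore (Finset.univ.filter (fun i : Fin N => ((i - j : Fin N) : ℕ) < Nstar))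
    rw [vFS, hcard, Nat.div_self hNs, Nat.mod_self] at h
    simpa [gFS] using h
  -- double counting
  have hdc : (N : ℝ) * ((Nstar : ℝ) * gFS B κ δ σ Nstar) ≤ (Nstar : ℝ) * ∑ i, u i := by
    have h1 : (N : ℝ) * ((Nstar : ℝ) * gFS B κ δ σ Nstar)
        = ∑ _j : Fin N, (Nstar : ℝ) * gFS B κ δ σ Nstar := by
      rw [Finset.sum_const, Finset.card_univ, Fintype.card_fin, nsmul_eq_mul]
    have h2 : ∑ j : Fin N,
        (∑ i ∈ Finset.univ.filter (fun i : Fin N => ((i - j : Fin N) : ℕ) < Nstar), u i)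
        = (Nstar : ℝ) * ∑ i, u i := by
      have h3 : ∀ j : Fin N,
          ∑ i ∈ Finset.univ.filter (fun i : Fin N => ((i - j : Fin N) : ℕ) < Nstar), u i
          = ∑ i : Fin N, if ((i - j : Fin N) : ℕ) < Nstar then u i else 0 := by
        intro j; rw [Finset.sum_filter]
      rw [Finset.sum_congr rfl fun j _ => h3 j, Finset.sum_comm]
      have h4 : ∀ i : Fin N,
          (∑ j : Fin N, if ((i - j : Fin N) : ℕ) < Nstar then u i else 0)
          = (Nstar : ℝ) * u i := by
        intro i
        rw [← Finset.sum_filter, Finset.sum_const, card_filter_sub_lt' N Nstar hNsle i,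
          nsmul_eq_mul]
      rw [Finset.sum_congr rfl fun i _ => h4 i, ← Finset.mul_sum]
    calc (N : ℝ) * ((Nstar : ℝ) * gFS B κ δ σ Nstar)
        = ∑ _j : Fin N, (Nstar : ℝ) * gFS B κ δ σ Nstar := h1
      _ ≤ ∑ j : Fin N, ∑ i ∈ Finset.univ.filter
            (fun i : Fin N => ((i - j : Fin N) : ℕ) < Nstar), u i :=
          Finset.sum_le_sum fun j _ => hSval j
      _ = (Nstar : ℝ) * ∑ i, u i := h2
  have hge : (N : ℝ) * gFS B κ δ σ Nstar ≤ ∑ i, u i := by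
    have hNspos : (0 : ℝ) < (Nstar : ℝ) := by exact_mod_cast hNs
    nlinarith [hdc]
  -- but the total value is strictly less
  have hcardU : (Finset.univ : Finset (Fin N)).card = N := by simp
  have hlt : ∑ i, u i < (N : ℝ) * gFS B κ δ σ Nstar := by
    rw [hsum, vFS, hcardU]
    have hcast : ((N / Nstar : ℕ) : ℝ) * (Nstar : ℝ) + (r : ℝ) = (N : ℝ) := by
      simp only [hrdef]
      have h6 : N / Nstar * Nstar + N % Nstar = N := Nat.div_add_mod' N Nstar
      exact_mod_cast h6
    have hrpos : (0 : ℝ) < (r : ℝ) := by exact_mod_cast hr0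
    have hlt2 : ((N % Nstar : ℕ) : ℝ) * gFS B κ δ σ (N % Nstar)
        < (r : ℝ) * gFS B κ δ σ Nstar := by
      rw [← hrdef]
      exact (mul_lt_mul_iff_right₀ hrpos).mpr hgr
    have h5 : ((N / Nstar : ℕ) : ℝ) * (Nstar : ℝ) * gFS B κ δ σ Nstar
        + (r : ℝ) * gFS B κ δ σ Nstar = (N : ℝ) * gFS B κ δ σ Nstar := by
      rw [← hcast]; ring
    linarith [hlt2, h5]
  linarith
end

section
/- Let η_1, …, η_N > 0 and H := ∑_{i=1}^N η_i. Suppose x_i, d_i : [0, ∞) → ℝ are differentiable functions satisfying, for all t ≥ 0 and all i ∈ {1,…,N}, the quantity adjustment process dx_i/dt = η_i·( d_i(t) − ∑_{j≠i} x_j(t) ) and dd_i/dt = −dx_i/dt, together with the initial optimality conditions x_i(0) + d_i(0) = x̂_β for all i. Then, writing X(t) := ∑_{i=1}^N x_i(t), one has X(t) = x̂_β + (X(0) − x̂_β)·e^{−H·t} for all t ≥ 0; in particular, the total production ∑_{i=1}^N x_i(t) converges to x̂_β as t → ∞. -/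
open Filter Finset

/-!
Since `dd_i/dt = -dx_i/dt`, each `x_i + d_i` stays at its initial value `x̂_β`. Substituting
`d_i = x̂_β - x_i` into the adjustment rule gives `dx_i/dt = η_i (x̂_β - X)` with `X = ∑ x_j`,
and summing over `i` turns the process into the scalar linear equation `dX/dt = H (x̂_β - X)`, whose solution relaxes exponentially to `x̂_β`.
-/

open Set

theorem eq_of_forall_hasDerivWithinAt_Ici_zero {f : ℝ → ℝ} {a : ℝ}
    (hf : ∀ t ∈ Ici a, HasDerivWithinAt f 0 (Ici a) t) {t : ℝ} (ht : a ≤ t) :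
    f t = f a :=
  constant_of_has_deriv_right_zero
    (fun s hs => (hf s hs.1).continuousWithinAt.mono Icc_subset_Ici_self)
    (fun s hs => (hf s hs.1).mono (Ici_subset_Ici.mpr hs.1)) t ⟨ht, le_rfl⟩

theorem eq_add_mul_exp_of_hasDerivWithinAt_Ici {g : ℝ → ℝ} {a c M : ℝ}
    (hg : ∀ t ∈ Ici a, HasDerivWithinAt g (c * (g t - M)) (Ici a) t) {t : ℝ} (ht : a ≤ t) :
    g t = M + (g a - M) * Real.exp (c * (t - a)) := by
  have hconst : ∀ s ∈ Ici a,
      HasDerivWithinAt (fun u => (g u - M) * Real.exp (-c * (u - a))) 0 (Ici a) s := by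
    intro s hs
    have hexp : HasDerivAt (fun u => Real.exp (-c * (u - a)))
        (Real.exp (-c * (s - a)) * (-c * 1)) s :=
      (((hasDerivAt_id s).sub_const a).const_mul (-c)).exp
    exact ((hg s hs).sub_const M |>.mul hexp.hasDerivWithinAt).congr_deriv (by ring)
  have h := eq_of_forall_hasDerivWithinAt_Ici_zero hconst ht
  simp only [sub_self, mul_zero, Real.exp_zero, mul_one] at h
  calc g t = M + (g t - M) * Real.exp (-c * (t - a)) * Real.exp (c * (t - a)) := by
        rw [mul_assoc, ← Real.exp_add, neg_mul, neg_add_cancel, Real.exp_zero]; ring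
    _ = M + (g a - M) * Real.exp (c * (t - a)) := by rw [h]

theorem tendsto_add_mul_exp_neg_mul_atTop {H : ℝ} (hH : 0 < H) (M C : ℝ) :
    Tendsto (fun t => M + C * Real.exp (-H * t)) atTop (nhds M) := by
  have hexp : Tendsto (fun t => Real.exp (-H * t)) atTop (nhds 0) :=
    Real.tendsto_exp_atBot.comp (tendsto_id.const_mul_atTop_of_neg (neg_neg_of_pos hH))
  simpa using tendsto_const_nhds.add (hexp.const_mul C)

section QuantityAdjustment

variable {N : ℕ} {η : Fin N → ℝ} {x d : Fin N → ℝ → ℝ}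

theorem add_eq_of_quantityAdjustment
    (hdx : ∀ t : ℝ, 0 ≤ t → ∀ i : Fin N,
      HasDerivWithinAt (x i) (η i * (d i t - ∑ j ∈ univ.erase i, x j t)) (Ici 0) t)
    (hdd : ∀ t : ℝ, 0 ≤ t → ∀ i : Fin N,
      HasDerivWithinAt (d i) (-(η i * (d i t - ∑ j ∈ univ.erase i, x j t))) (Ici 0) t)
    (i : Fin N) {t : ℝ} (ht : 0 ≤ t) :
    x i t + d i t = x i 0 + d i 0 :=
  eq_of_forall_hasDerivWithinAt_Ici_zero
    (fun s hs => by simpa using (hdx s hs i).add (hdd s hs i)) ht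

theorem hasDerivWithinAt_sum_of_quantityAdjustment {M : ℝ}
    (hdx : ∀ t : ℝ, 0 ≤ t → ∀ i : Fin N,
      HasDerivWithinAt (x i) (η i * (d i t - ∑ j ∈ univ.erase i, x j t)) (Ici 0) t)
    (hxd : ∀ i : Fin N, ∀ t : ℝ, 0 ≤ t → x i t + d i t = M) {t : ℝ} (ht : 0 ≤ t) :
    HasDerivWithinAt (fun u => ∑ i, x i u) ((∑ i, η i) * (M - ∑ i, x i t)) (Ici 0) t := by
  refine (HasDerivWithinAt.fun_sum fun i _ => hdx t ht i).congr_deriv ?_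
  rw [sum_mul]
  refine sum_congr rfl fun i _ => ?_
  rw [sum_erase_eq_sub (mem_univ i), show d i t = M - x i t by linarith [hxd i t ht]]
  ring

end QuantityAdjustment

theorem stmt19_general (B : BenefitFun) (N : ℕ) (hN : 2 ≤ N)
    (β : ℝ)
    (η : Fin N → ℝ) (hη : ∀ i, 0 < η i) (H : ℝ) (hH : H = ∑ i, η i)
    (x d : Fin N → ℝ → ℝ)
    (hdx : ∀ t : ℝ, 0 ≤ t → ∀ i : Fin N,
      HasDerivWithinAt (x i) (η i * (d i t - ∑ j ∈ Finset.univ.erase i, x j t))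
        (Set.Ici 0) t)
    (hdd : ∀ t : ℝ, 0 ≤ t → ∀ i : Fin N,
      HasDerivWithinAt (d i) (-(η i * (d i t - ∑ j ∈ Finset.univ.erase i, x j t)))
        (Set.Ici 0) t)
    (hinit : ∀ i, x i 0 + d i 0 = B.xhat β) :
    (∀ t : ℝ, 0 ≤ t →
      (∑ i, x i t) = B.xhat β + ((∑ i, x i 0) - B.xhat β) * Real.exp (-H * t))
    ∧ Filter.Tendsto (fun t => ∑ i, x i t) Filter.atTop (nhds (B.xhat β)) := by
  have hxd i t (ht : 0 ≤ t) : x i t + d i t = B.xhat β :=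
    (add_eq_of_quantityAdjustment hdx hdd i ht).trans (hinit i)
  have hX : ∀ t ∈ Ici (0 : ℝ), HasDerivWithinAt (fun u => ∑ i, x i u)
      (-H * ((∑ i, x i t) - B.xhat β)) (Ici 0) t := fun t ht =>
    (hasDerivWithinAt_sum_of_quantityAdjustment hdx hxd ht).congr_deriv (by rw [hH]; ring)
  have closed : ∀ t : ℝ, 0 ≤ t →
      (∑ i, x i t) = B.xhat β + ((∑ i, x i 0) - B.xhat β) * Real.exp (-H * t) := fun t ht => by
    simpa using eq_add_mul_exp_of_hasDerivWithinAt_Ici hX ht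
  have hH0 : 0 < H := hH ▸ sum_pos (fun i _ => hη i) (univ_nonempty_iff.mpr ⟨⟨0, by omega⟩⟩)
  refine ⟨closed, (tendsto_add_mul_exp_neg_mul_atTop hH0 (B.xhat β)
    ((∑ i, x i 0) - B.xhat β)).congr' ?_⟩
  filter_upwards [eventually_ge_atTop 0] with t ht
  exact (closed t ht).symm

theorem stmt19 (B : BenefitFun) (N : ℕ) (hN : 2 ≤ N)
    (κ δ σ : ℝ) (hκ : 0 < κ) (hδ : 0 < δ) (hσ : 0 < σ)
    (hcost : δ + σ < κ) (hκf : κ < B.f' 0)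
    (β : ℝ) (hβ : β = (1 / (N:ℝ)) * κ + (((N:ℝ) - 1) / (N:ℝ)) * (δ + σ))
    (η : Fin N → ℝ) (hη : ∀ i, 0 < η i) (H : ℝ) (hH : H = ∑ i, η i)
    (x d : Fin N → ℝ → ℝ)
    (hdx : ∀ t : ℝ, 0 ≤ t → ∀ i : Fin N,
      HasDerivWithinAt (x i) (η i * (d i t - ∑ j ∈ Finset.univ.erase i, x j t))
        (Set.Ici 0) t)
    (hdd : ∀ t : ℝ, 0 ≤ t → ∀ i : Fin N,
      HasDerivWithinAt (d i) (-(η i * (d i t - ∑ j ∈ Finset.univ.erase i, x j t)))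
        (Set.Ici 0) t)
    (hinit : ∀ i, x i 0 + d i 0 = B.xhat β) :
    (∀ t : ℝ, 0 ≤ t →
      (∑ i, x i t) = B.xhat β + ((∑ i, x i 0) - B.xhat β) * Real.exp (-H * t))
    ∧ Filter.Tendsto (fun t => ∑ i, x i t) Filter.atTop (nhds (B.xhat β)) :=
  stmt19_general B N hN β η hη H hH x d hdx hdd hinit
end
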